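/- arXiv:math/0010268 — 4 statements merged into one kernel-verified Lean document; each statement's English description precedes it below -/
import Mathlib

section
/- For any set m, there is an injection from the set of finite one-to-one sequences of m into Fin(Fin(m)). -/
private def F {α : Type*} [DecidableEq α] : List α → Finset (Finset α)
  | [] => {∅}
  | a :: l => insert ∅ ((F l).image (insert a))

private lemma empty_mem_F {α : Type*} [DecidableEq α] : ∀ (l : List α), ∅ ∈ F l
  | [] => by simp [F]
  | a :: l => by simp [F]

private lemma F_subset {α : Type*} [DecidableEq α] : ∀ (l : List α), ∀ s ∈ F l, s ⊆ l.toFinset := by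
  intro l
  induction l with
  | nil => intro s hs; simp [F] at hs; simp [hs]
  | cons a l ih =>
    intro s hs
    simp [F] at hs
    rcases hs with h | ⟨t, ht, rfl⟩
    · simp [h]
    · intro x hx
      simp at hx
      rcases hx with rfl | hx
      · simp
      · simp [ih t ht hx]

private lemma F_inj {α : Type*} [DecidableEq α] : ∀ (l₁ l₂ : List α), l₁.Nodup → l₂.Nodup →
    F l₁ = F l₂ → l₁ = l₂ := by
  intro l₁
  induction l₁ with
  | nil =>
    intro l₂ _ _ h
    cases l₂ with
    | nil => rfl
    | cons b l' =>
      exfalso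
      have hb : ({b} : Finset α) ∈ F (b :: l') := by
        simp [F]
        exact ⟨∅, empty_mem_F _, by simp⟩
      rw [← h] at hb
      simp [F] at hb
  | cons a l ih =>
    intro l₂ h₁ h₂ h
    cases l₂ with
    | nil =>
      exfalso
      have hb : ({a} : Finset α) ∈ F (a :: l) := by
        simp [F]
        exact ⟨∅, empty_mem_F _, by simp⟩
      rw [h] at hb
      simp [F] at hb
    | cons b l' =>
      have hab : a = b := by
        have hb : ({a} : Finset α) ∈ F (b :: l') := by
          rw [← h]
          simp [F]
          exact ⟨∅, empty_mem_F _, by simp⟩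
        simp [F] at hb
        obtain ⟨t, -, ht⟩ := hb
        have hba : b ∈ ({a} : Finset α) := by rw [← ht]; simp
        have : b = a := by simpa using hba
        exact this.symm
      subst hab
      have ha : a ∉ l := by simp [List.nodup_cons] at h₁; exact h₁.1
      have ha' : a ∉ l' := by simp [List.nodup_cons] at h₂; exact h₂.1
      have key : F l = F l' := by
        ext s
        constructor
        · intro hs
          have hmem : insert a s ∈ F (a :: l') := by
            rw [← h]; simp [F]; exact ⟨s, hs, rfl⟩
          simp [F] at hmem
          obtain ⟨t, ht, htt⟩ := hmem
          · have has : a ∉ s := fun hx => ha (by simpa using F_subset l s hs hx)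
            have hat : a ∉ t := fun hx => ha' (by simpa using F_subset l' t ht hx)
            have : t = s := by
              have := congrArg (Finset.erase · a) htt
              simpa [Finset.erase_insert has, Finset.erase_insert hat] using this
            rwa [this] at ht
        · intro hs
          have hmem : insert a s ∈ F (a :: l) := by
            rw [h]; simp [F]; exact ⟨s, hs, rfl⟩
          simp [F] at hmem
          obtain ⟨t, ht, htt⟩ := hmem
          · have has : a ∉ s := fun hx => ha' (by simpa using F_subset l' s hs hx)
            have hat : a ∉ t := fun hx => ha (by simpa using F_subset l t ht hx)
            have : t = s := by
              have := congrArg (Finset.erase · a) htt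
              simpa [Finset.erase_insert has, Finset.erase_insert hat] using this
            rwa [this] at ht
      have := ih l' (List.Nodup.of_cons h₁) (List.Nodup.of_cons h₂) key
      rw [this]

theorem seq_inj_finset_finset (α : Type*) :
    ∃ f : {l : List α // l.Nodup} → Finset (Finset α), Function.Injective f := by
  haveI := Classical.decEq α
  refine ⟨fun l => F l.1, fun l₁ l₂ h => ?_⟩
  exact Subtype.ext (F_inj l₁.1 l₂.1 l₁.2 l₂.2 h)
end

section
/- If m is an infinite set, then there is an injection from the power set of ℕ into the power set of Fin(m), the set of finite subsets of m. -/
theorem powerset_nat_inj_powerset_finset (α : Type*) [Infinite α] :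
    ∃ f : Set ℕ → Set (Finset α), Function.Injective f := by
  refine ⟨fun x => {s | s.card ∈ x}, fun x y h => ?_⟩
  simp only [Set.ext_iff, Set.mem_setOf_eq] at h
  ext n
  obtain ⟨s, hs⟩ : ∃ s : Finset α, s.card = n := Finset.exists_card_eq n
  have := h s
  rw [hs] at this
  exact this
end

section
/- For an infinite set m, there is no bijection between the set of all finite sequences of m and the power set of m. -/
theorem no_equiv_list_powerset (α : Type*) [Infinite α] :
    ¬ Nonempty (List α ≃ Set α) := by
  rintro ⟨e⟩
  have h := Cardinal.mk_congr e
  rw [Cardinal.mk_list_eq_mk, Cardinal.mk_set] at h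
  exact (Cardinal.cantor _).ne h
end

section
/- For an infinite set m, there is no bijection between the set of all finite one-to-one sequences of m and the power set of m. -/
theorem no_equiv_nodup_list_powerset (α : Type*) [Infinite α] :
    ¬ Nonempty ({l : List α // l.Nodup} ≃ Set α) := by
  rintro ⟨e⟩
  have h1 : Cardinal.mk (Set α) ≤ Cardinal.mk (List α) := by
    rw [← Cardinal.mk_congr e]
    exact Cardinal.mk_le_of_injective Subtype.val_injective
  rw [Cardinal.mk_list_eq_mk α, Cardinal.mk_set] at h1
  exact absurd h1 (not_le.mpr (Cardinal.cantor _))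
end
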